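/- For real numbers μ_1, ..., μ_n (n ≥ 3) with ∑ μ_i = 0, equality |∑ μ_i³| = ((n-2)/√(n(n-1))) · (∑ μ_i²)^{3/2} holds if and only if at least n-1 of the μ_i are equal to each other. -/

import Mathlib

/-!
Put `s = ∑ μᵢ²` and `c = √(s / (n (n - 1)))`. Since the other `n - 1` values sum to `-μᵢ`,
Cauchy–Schwarz gives `μᵢ ≤ (n - 1) c`. Hence every term of
`∑ (μᵢ - (n - 1) c) (μᵢ + c)² = ∑ μᵢ³ - (n - 2) c s` is nonpositive, so `∑ μᵢ³ ≤ (n - 2) c s`,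
with equality iff each `μᵢ` is `(n - 1) c` or `-c`; as `∑ μᵢ = 0`, exactly one of them is then
`(n - 1) c`. Replacing `μ` by `-μ` gives the lower bound, and a direct computation the converse.
-/

open Finset

section
variable {ι : Type*} [Fintype ι] {μ : ι → ℝ}

lemma card_mul_sq_le_of_sum_eq_zero (hμ : ∑ i, μ i = 0) (i : ι) :
    Fintype.card ι * μ i ^ 2 ≤ (Fintype.card ι - 1) * ∑ k, μ k ^ 2 := by
  classical
  have hsum : ∑ k ∈ {i}ᶜ, μ k = -μ i := by
    linarith [Fintype.sum_eq_add_sum_compl i μ]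
  have hsq : ∑ k ∈ {i}ᶜ, μ k ^ 2 = ∑ k, μ k ^ 2 - μ i ^ 2 := by
    linarith [Fintype.sum_eq_add_sum_compl i (μ · ^ 2)]
  have hcard : (#({i}ᶜ : Finset ι) : ℝ) = Fintype.card ι - 1 := by
    rw [card_compl, card_singleton, Nat.cast_sub (Fintype.card_pos_iff.mpr ⟨i⟩), Nat.cast_one]
  have hcs := sq_sum_le_card_mul_sum_sq (s := {i}ᶜ) (f := μ)
  rw [hsum, hsq, hcard, neg_sq] at hcs
  linarith

variable {c : ℝ}

lemma le_card_sub_one_mul_of_sum_eq_zero (hμ : ∑ i, μ i = 0) (hc : 0 ≤ c)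
    (hs : Fintype.card ι * (Fintype.card ι - 1) * c ^ 2 = ∑ i, μ i ^ 2) (i : ι) :
    μ i ≤ (Fintype.card ι - 1) * c := by
  have hn1 : (1 : ℝ) ≤ Fintype.card ι := Nat.one_le_cast.mpr (Fintype.card_pos_iff.mpr ⟨i⟩)
  have h := card_mul_sq_le_of_sum_eq_zero hμ i
  rw [← hs] at h
  refine (abs_le_of_sq_le_sq' ?_ (mul_nonneg (by linarith) hc)).2
  nlinarith

lemma sum_sub_mul_add_sq_eq (hμ : ∑ i, μ i = 0)
    (hs : Fintype.card ι * (Fintype.card ι - 1) * c ^ 2 = ∑ i, μ i ^ 2) :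
    ∑ i, (μ i - (Fintype.card ι - 1) * c) * (μ i + c) ^ 2 =
      ∑ i, μ i ^ 3 - (Fintype.card ι - 2) * c * ∑ i, μ i ^ 2 := by
  have expand : ∀ i, (μ i - (Fintype.card ι - 1) * c) * (μ i + c) ^ 2 =
      μ i ^ 3 + (3 - Fintype.card ι) * c * μ i ^ 2 + (3 - 2 * Fintype.card ι) * c ^ 2 * μ i
        - (Fintype.card ι - 1) * c ^ 3 := fun i => by ring
  simp only [expand, sum_sub_distrib, sum_add_distrib, ← mul_sum, hμ, sum_const, card_univ,
    nsmul_eq_mul]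
  linear_combination (-c) * hs

theorem sum_cube_eq_iff (hμ : ∑ i, μ i = 0) (hc : 0 ≤ c)
    (hs : Fintype.card ι * (Fintype.card ι - 1) * c ^ 2 = ∑ i, μ i ^ 2) :
    ∑ i, μ i ^ 3 = (Fintype.card ι - 2) * c * ∑ i, μ i ^ 2 ↔
      ∀ i, μ i = (Fintype.card ι - 1) * c ∨ μ i = -c := by
  have hnonpos : ∀ i ∈ univ, (μ i - (Fintype.card ι - 1) * c) * (μ i + c) ^ 2 ≤ 0 := fun i _ =>
    mul_nonpos_of_nonpos_of_nonneg
      (by linarith [le_card_sub_one_mul_of_sum_eq_zero hμ hc hs i]) (sq_nonneg _)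
  rw [← sub_eq_zero, ← sum_sub_mul_add_sq_eq hμ hs, sum_eq_zero_iff_of_nonpos hnonpos]
  simp [sub_eq_zero, add_eq_zero_iff_eq_neg]

lemma exists_forall_ne_eq_neg [Nonempty ι] (hμ : ∑ i, μ i = 0)
    (h : ∀ i, μ i = (Fintype.card ι - 1) * c ∨ μ i = -c) : ∃ j, ∀ i ≠ j, μ i = -c := by
  obtain rfl | hc := eq_or_ne c 0
  · exact ⟨Classical.arbitrary ι, fun i _ => by simpa using h i⟩
  classical
  set S := univ.filter (fun i => μ i = (Fintype.card ι - 1) * c)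
  have hn : (Fintype.card ι : ℝ) ≠ 0 := by exact_mod_cast Fintype.card_ne_zero
  -- `μ i + c` vanishes off `S` and equals `n c` on it, while its total is `n c`.
  have hS : (#S : ℝ) * (Fintype.card ι * c) = 1 * (Fintype.card ι * c) := by
    have h1 : ∑ i ∈ S, (μ i + c) = ∑ i, (μ i + c) :=
      sum_filter_of_ne fun i _ hi =>
        (h i).resolve_right fun h' => hi (by rw [h', neg_add_cancel])
    have h2 : ∑ i ∈ S, (μ i + c) = #S * (Fintype.card ι * c) := by
      rw [sum_congr rfl fun i hi => show μ i + c = Fintype.card ι * c by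
        rw [(mem_filter.mp hi).2]; ring, sum_const, nsmul_eq_mul]
    rw [← h2, h1, sum_add_distrib, hμ, sum_const, card_univ, nsmul_eq_mul]
    ring
  obtain ⟨j, hj⟩ := card_eq_one.mp (by exact_mod_cast mul_right_cancel₀ (mul_ne_zero hn hc) hS)
  refine ⟨j, fun i hij => (h i).resolve_left fun hi => hij ?_⟩
  have hiS : i ∈ S := mem_filter.mpr ⟨mem_univ i, hi⟩
  rwa [hj, mem_singleton] at hiS

lemma sum_pow_eq_of_forall_ne_eq {j : ι} {a : ℝ} (ha : ∀ i ≠ j, μ i = a) (m : ℕ) :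
    ∑ i, μ i ^ m = μ j ^ m + (Fintype.card ι - 1) * a ^ m := by
  classical
  rw [Fintype.sum_eq_add_sum_compl j, sum_congr rfl fun i hi => by rw [ha i (by simpa using hi)],
    sum_const, card_compl, card_singleton, nsmul_eq_mul,
    Nat.cast_sub (Fintype.card_pos_iff.mpr ⟨j⟩), Nat.cast_one]

lemma abs_sum_cube_eq_of_forall_ne_eq (hμ : ∑ i, μ i = 0) (hc : 0 ≤ c)
    (hs : Fintype.card ι * (Fintype.card ι - 1) * c ^ 2 = ∑ i, μ i ^ 2)
    (hn : 2 ≤ Fintype.card ι) {j : ι} {a : ℝ} (ha : ∀ i ≠ j, μ i = a) :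
    |∑ i, μ i ^ 3| = (Fintype.card ι - 2) * c * ∑ i, μ i ^ 2 := by
  have hn' : (2 : ℝ) ≤ Fintype.card ι := by exact_mod_cast hn
  have hj : μ j = -(Fintype.card ι - 1) * a := by
    have h1 := sum_pow_eq_of_forall_ne_eq ha 1
    simp only [pow_one, hμ] at h1
    linarith
  have h2 : ∑ i, μ i ^ 2 = Fintype.card ι * (Fintype.card ι - 1) * a ^ 2 := by
    rw [sum_pow_eq_of_forall_ne_eq ha 2, hj]; ring
  have h3 : ∑ i, μ i ^ 3 = -((Fintype.card ι - 2) * a * ∑ i, μ i ^ 2) := by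
    rw [sum_pow_eq_of_forall_ne_eq ha 3, h2, hj]; ring
  have hca : c = |a| := by
    have hX : (0 : ℝ) < Fintype.card ι * (Fintype.card ι - 1) := by nlinarith
    rw [← abs_of_nonneg hc, ← sq_eq_sq_iff_abs_eq_abs]
    exact mul_left_cancel₀ hX.ne' (hs.trans h2)
  rw [h3, hca, abs_neg, abs_mul, abs_mul, abs_of_nonneg (by linarith : (0 : ℝ) ≤ _),
    abs_of_nonneg (sum_nonneg fun i _ => sq_nonneg (μ i))]

lemma exists_forall_ne_eq_of_sum_cube_eq [Nonempty ι] (hμ : ∑ i, μ i = 0) (hc : 0 ≤ c)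
    (hs : Fintype.card ι * (Fintype.card ι - 1) * c ^ 2 = ∑ i, μ i ^ 2)
    (h : ∑ i, μ i ^ 3 = (Fintype.card ι - 2) * c * ∑ i, μ i ^ 2) :
    ∃ j, ∀ i ≠ j, ∀ k ≠ j, μ i = μ k := by
  obtain ⟨j, hj⟩ := exists_forall_ne_eq_neg hμ ((sum_cube_eq_iff hμ hc hs).1 h)
  exact ⟨j, fun i hi k hk => (hj i hi).trans (hj k hk).symm⟩

theorem abs_sum_cube_eq_iff [Nontrivial ι] (hμ : ∑ i, μ i = 0) (hc : 0 ≤ c)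
    (hs : Fintype.card ι * (Fintype.card ι - 1) * c ^ 2 = ∑ i, μ i ^ 2) :
    |∑ i, μ i ^ 3| = (Fintype.card ι - 2) * c * ∑ i, μ i ^ 2 ↔
      ∃ j, ∀ i ≠ j, ∀ k ≠ j, μ i = μ k := by
  constructor
  · intro h
    rcases eq_or_eq_neg_of_abs_eq h with h | h
    · exact exists_forall_ne_eq_of_sum_cube_eq hμ hc hs h
    · have hsq : ∑ i, (-μ) i ^ 2 = ∑ i, μ i ^ 2 := by simp only [Pi.neg_apply, neg_sq]
      obtain ⟨j, hj⟩ := exists_forall_ne_eq_of_sum_cube_eq (μ := -μ) (by simp [hμ]) hc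
        (hs.trans hsq.symm) (by rw [hsq]; simp only [Pi.neg_apply,
          (by decide : Odd 3).neg_pow, sum_neg_distrib, h, neg_neg])
      exact ⟨j, fun i hi k hk => neg_inj.mp (hj i hi k hk)⟩
  · rintro ⟨j, hj⟩
    obtain ⟨i₀, hi₀⟩ := exists_ne j
    exact abs_sum_cube_eq_of_forall_ne_eq hμ hc hs Fintype.one_lt_card fun i hi => hj i hi i₀ hi₀

end

lemma Real.rpow_three_halves {x : ℝ} (hx : 0 ≤ x) : x ^ ((3 : ℝ) / 2) = x * √x := by
  rw [sqrt_eq_rpow, show (3 : ℝ) / 2 = 1 + 1 / 2 by norm_num, rpow_add' hx (by norm_num),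
    rpow_one]

theorem stmt_1 (n : ℕ) (hn : 3 ≤ n) (μ : Fin n → ℝ) (hsum : ∑ i, μ i = 0) :
    |∑ i, μ i ^ 3| = ((n : ℝ) - 2) / Real.sqrt (n * (n - 1)) * (∑ i, μ i ^ 2) ^ ((3 : ℝ) / 2) ↔
      ∃ j : Fin n, ∀ i, i ≠ j → ∀ k, k ≠ j → μ i = μ k := by
  have : Nontrivial (Fin n) := Fin.nontrivial_iff_two_le.mpr (by omega)
  have hX : (0 : ℝ) < n * (n - 1) := by
    have : (3 : ℝ) ≤ n := by exact_mod_cast hn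
    nlinarith
  set s := ∑ i, μ i ^ 2
  have hs0 : 0 ≤ s := sum_nonneg fun i _ => sq_nonneg (μ i)
  have hs : (n : ℝ) * (n - 1) * √(s / (n * (n - 1))) ^ 2 = s := by
    rw [Real.sq_sqrt (by positivity), mul_div_cancel₀ _ hX.ne']
  have hrhs : ((n : ℝ) - 2) / √(n * (n - 1)) * s ^ ((3 : ℝ) / 2) =
      (n - 2) * √(s / (n * (n - 1))) * s := by
    rw [Real.rpow_three_halves hs0, Real.sqrt_div hs0]
    ring
  have key := abs_sum_cube_eq_iff hsum (Real.sqrt_nonneg _) (by rwa [Fintype.card_fin])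
  rwa [Fintype.card_fin, ← hrhs] at key
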